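/- Let Γ_K(u) := u (log̃ u)² for 0 ≤ u ≤ K and Γ_K(u) := (2 + log K) u log u − 2K log K for u > K, where K ≥ e² and log̃ u := 1 for u ≤ e and log u for u > e. Then Γ_K is convex on [0,∞) and for all u > 0, Γ_K''(u) ≥ (log̃_K u)/u · 1_{u ≥ e}, where log̃_K u := 1 for u ≤ e, log u for e < u ≤ K, and log K for u > K (second derivative understood away from the finitely many junction points). -/

import Mathlib

/-!
On `[0, e]`, `[e, K]` and `[K, ∞)` the function `Γ_K` is `u`, `u log² u` and an increasing affine
function of `u log u`, each convex there. At the junctions the derivative jumps up, from `1` to `3`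
at `e` and from `log² K + 2 log K` to `(2 + log K)(1 + log K)` at `K`, so the three pieces glue to a
convex function. The bound on `Γ_K''` is a direct computation on each open piece.
-/

open Real Set Topology

lemma le_slope_of_le_slope_of_le_slope {f : ℝ → ℝ} {x y z c : ℝ} (hxy : x < y) (hyz : y < z)
    (h₁ : c ≤ slope f x y) (h₂ : c ≤ slope f y z) : c ≤ slope f x z := by
  rw [← sub_div_sub_smul_slope_add_sub_div_sub_smul_slope f x y z]
  refine convex_Ici c h₁ h₂ (by apply div_nonneg <;> linarith) (by apply div_nonneg <;> linarith) ?_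
  rw [← add_div, div_eq_one_iff_eq (by linarith)]
  ring

lemma slope_le_of_slope_le_of_slope_le {f : ℝ → ℝ} {x y z c : ℝ} (hxy : x < y) (hyz : y < z)
    (h₁ : slope f x y ≤ c) (h₂ : slope f y z ≤ c) : slope f x z ≤ c := by
  rw [← sub_div_sub_smul_slope_add_sub_div_sub_smul_slope f x y z]
  refine convex_Iic c h₁ h₂ (by apply div_nonneg <;> linarith) (by apply div_nonneg <;> linarith) ?_
  rw [← add_div, div_eq_one_iff_eq (by linarith)]
  ring

theorem ConvexOn.of_Iic_of_Ici {f : ℝ → ℝ} {s : Set ℝ} {a d₁ d₂ : ℝ} (hs : Convex ℝ s)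
    (h₁ : ConvexOn ℝ (s ∩ Iic a) f) (h₂ : ConvexOn ℝ (s ∩ Ici a) f)
    (hd₁ : HasDerivWithinAt f d₁ (Iio a) a) (hd₂ : HasDerivWithinAt f d₂ (Ioi a) a)
    (hd : d₁ ≤ d₂) : ConvexOn ℝ s f := by
  have adj₁ {x y z : ℝ} (hx : x ∈ s ∩ Iic a) (hz : z ∈ s ∩ Iic a) (hxy : x < y) (hyz : y < z) :
      slope f x y ≤ slope f y z := by
    simpa only [slope_def_field] using h₁.slope_mono_adjacent hx hz hxy hyz
  have adj₂ {x y z : ℝ} (hx : x ∈ s ∩ Ici a) (hz : z ∈ s ∩ Ici a) (hxy : x < y) (hyz : y < z) :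
      slope f x y ≤ slope f y z := by
    simpa only [slope_def_field] using h₂.slope_mono_adjacent hx hz hxy hyz
  have cross {x z : ℝ} (hx : x ∈ s) (hz : z ∈ s) (hxa : x < a) (haz : a < z) :
      slope f x a ≤ slope f a z := by
    have ha : a ∈ s := hs.ordConnected.out hx hz ⟨hxa.le, haz.le⟩
    calc slope f x a ≤ d₁ :=
          h₁.slope_le_of_hasDerivWithinAt_Iio ⟨hx, hxa.le⟩ ⟨ha, self_mem_Iic⟩ hxa hd₁
      _ ≤ d₂ := hd
      _ ≤ slope f a z :=
          h₂.le_slope_of_hasDerivWithinAt_Ioi ⟨ha, self_mem_Ici⟩ ⟨hz, haz.le⟩ haz hd₂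
  refine convexOn_of_slope_mono_adjacent hs fun {x y z} hx hz hxy hyz => ?_
  simp only [← slope_def_field]
  have hy : y ∈ s := hs.ordConnected.out hx hz ⟨hxy.le, hyz.le⟩
  rcases le_or_gt z a with hza | haz
  · exact adj₁ ⟨hx, (hxy.trans hyz).le.trans hza⟩ ⟨hz, hza⟩ hxy hyz
  rcases le_or_gt a x with hax | hxa
  · exact adj₂ ⟨hx, hax⟩ ⟨hz, hax.trans (hxy.trans hyz).le⟩ hxy hyz
  have ha : a ∈ s := hs.ordConnected.out hx hz ⟨hxa.le, haz.le⟩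
  rcases lt_trichotomy y a with hya | rfl | hay
  · have h := adj₁ ⟨hx, hxa.le⟩ ⟨ha, self_mem_Iic⟩ hxy hya
    exact le_slope_of_le_slope_of_le_slope hya haz h (h.trans (cross hy hz hya haz))
  · exact cross hx hz hxy hyz
  · have h := adj₂ ⟨ha, self_mem_Ici⟩ ⟨hz, (hay.trans hyz).le⟩ hay hyz
    exact slope_le_of_slope_le_of_slope_le hxa hay ((cross hx hy hxa hay).trans h) h

lemma hasDerivAt_mul_log_sq {u : ℝ} (hu : u ≠ 0) :
    HasDerivAt (fun u ↦ u * log u ^ 2) (log u ^ 2 + 2 * log u) u := by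
  refine ((hasDerivAt_id' u).fun_mul ((hasDerivAt_log hu).fun_pow 2)).congr_deriv ?_
  field_simp
  ring

lemma deriv_deriv_mul_log_sq {u : ℝ} (hu : u ≠ 0) :
    deriv (deriv fun u ↦ u * log u ^ 2) u = 2 * log u / u + 2 / u := by
  have hderiv : deriv (fun u ↦ u * log u ^ 2) =ᶠ[𝓝 u] fun u ↦ log u ^ 2 + 2 * log u := by
    filter_upwards [isOpen_ne.mem_nhds hu] with v hv
    exact (hasDerivAt_mul_log_sq hv).deriv
  rw [hderiv.deriv_eq]
  convert (((hasDerivAt_log hu).fun_pow 2).fun_add ((hasDerivAt_log hu).const_mul 2)).deriv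
    using 1
  field_simp
  ring

lemma convexOn_mul_log_sq : ConvexOn ℝ (Ici (exp (-1))) fun u ↦ u * log u ^ 2 := by
  have hpos {u : ℝ} (hu : u ∈ Ici (exp (-1))) : 0 < u := (exp_pos _).trans_le hu
  refine MonotoneOn.convexOn_of_deriv (convex_Ici _)
    (fun u hu ↦ (hasDerivAt_mul_log_sq (hpos hu).ne').continuousAt.continuousWithinAt)
    (fun u hu ↦ (hasDerivAt_mul_log_sq (hpos (interior_subset hu)).ne').differentiableAt
      |>.differentiableWithinAt) ?_
  intro u hu v hv huv
  rw [interior_Ici] at hu hv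
  have hu₀ := hpos (Ioi_subset_Ici_self hu)
  rw [(hasDerivAt_mul_log_sq hu₀.ne').deriv,
    (hasDerivAt_mul_log_sq (hu₀.trans_le huv).ne').deriv]
  -- `log u ^ 2 + 2 * log u = (log u + 1) ^ 2 - 1` is monotone where `log u ≥ -1`
  have hlu : -1 ≤ log u := (le_log_iff_exp_le hu₀).2 hu.le
  have hluv : log u ≤ log v := log_le_log hu₀ huv
  nlinarith

lemma hasDerivAt_const_mul_mul_log_sub_const (a c : ℝ) {u : ℝ} (hu : u ≠ 0) :
    HasDerivAt (fun u ↦ a * u * log u - c) (a * (log u + 1)) u := by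
  simpa only [mul_assoc] using ((hasDerivAt_mul_log hu).const_mul a).sub_const c

lemma deriv_deriv_const_mul_mul_log_sub_const (a c u : ℝ) :
    deriv (deriv fun u ↦ a * u * log u - c) u = a / u := by
  have h := deriv2_mul_log u
  simp only [Function.iterate_succ, Function.iterate_zero, Function.comp_apply, id] at h
  simp only [mul_assoc, deriv_sub_const_fun, deriv_const_mul_field', h, div_eq_mul_inv]

lemma convexOn_const_mul_mul_log_sub_const {a : ℝ} (ha : 0 ≤ a) (c : ℝ) :
    ConvexOn ℝ (Ici 0) fun u ↦ a * u * log u - c :=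
  ((convexOn_mul_log.smul ha).add_const (-c)).congr fun u _ ↦ by
    simp only [Pi.add_apply, smul_eq_mul]
    ring

noncomputable def renormGamma (K u : ℝ) : ℝ :=
  if u ≤ K then u * max 1 (log u) ^ 2 else (2 + log K) * u * log u - 2 * K * log K

section renormGamma

variable {K : ℝ}

lemma renormGamma_eqOn_Icc_zero (hK : exp 1 ≤ K) : EqOn (renormGamma K) id (Icc 0 (exp 1)) := by
  rintro u ⟨hu₀, hu⟩
  have hlog : log u ≤ 1 := by
    rcases hu₀.eq_or_lt with rfl | hu₀
    · simp
    · exact (log_le_iff_le_exp hu₀).2 hu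
  simp [renormGamma, hu.trans hK, hlog]

lemma renormGamma_eqOn_Icc_exp_one :
    EqOn (renormGamma K) (fun u ↦ u * log u ^ 2) (Icc (exp 1) K) := by
  rintro u ⟨hu, huK⟩
  have hlog : 1 ≤ log u := (le_log_iff_exp_le ((exp_pos 1).trans_le hu)).2 hu
  simp [renormGamma, huK, hlog]

lemma renormGamma_eqOn_Ici (hK : exp 1 ≤ K) :
    EqOn (renormGamma K) (fun u ↦ (2 + log K) * u * log u - 2 * K * log K) (Ici K) := by
  intro u (hu : K ≤ u)
  rcases hu.eq_or_lt with rfl | hu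
  · rw [renormGamma_eqOn_Icc_exp_one ⟨hK, le_rfl⟩]
    ring
  · simp [renormGamma, hu.not_ge]

theorem convexOn_renormGamma (hK : exp 1 < K) : ConvexOn ℝ (Ici 0) (renormGamma K) := by
  have he : 0 < exp 1 := exp_pos 1
  have hlogK : 1 < log K := (lt_log_iff_exp_lt (he.trans hK)).2 hK
  have hlow : ConvexOn ℝ (Icc 0 (exp 1)) (renormGamma K) :=
    (convexOn_id (convex_Icc _ _)).congr (renormGamma_eqOn_Icc_zero hK.le).symm
  have hmid : ConvexOn ℝ (Icc (exp 1) K) (renormGamma K) :=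
    (convexOn_mul_log_sq.subset (Icc_subset_Ici_self.trans (Ici_subset_Ici.2
      (exp_le_exp.2 (by norm_num)))) (convex_Icc _ _)).congr renormGamma_eqOn_Icc_exp_one.symm
  have hhigh : ConvexOn ℝ (Ici K) (renormGamma K) :=
    ((convexOn_const_mul_mul_log_sub_const (by linarith) _).subset
      (Ici_subset_Ici.2 (he.trans hK).le) (convex_Ici K)).congr (renormGamma_eqOn_Ici hK.le).symm
  have hbelowK : ConvexOn ℝ (Icc 0 K) (renormGamma K) := by
    refine ConvexOn.of_Iic_of_Ici (a := exp 1) (convex_Icc 0 K)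
      (hlow.subset (fun u hu ↦ ⟨hu.1.1, hu.2⟩) ((convex_Icc _ _).inter (convex_Iic _)))
      (hmid.subset (fun u hu ↦ ⟨hu.2, hu.1.2⟩) ((convex_Icc _ _).inter (convex_Ici _)))
      (((hasDerivAt_id _).hasDerivWithinAt.congr_of_mem (renormGamma_eqOn_Icc_zero hK.le)
        ⟨he.le, le_rfl⟩).mono_of_mem_nhdsWithin (Icc_mem_nhdsLT he))
      (((hasDerivAt_mul_log_sq he.ne').hasDerivWithinAt.congr_of_mem
        renormGamma_eqOn_Icc_exp_one ⟨le_rfl, hK.le⟩).mono_of_mem_nhdsWithin (Icc_mem_nhdsGT hK))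
      ?_
    norm_num [log_exp]
  refine ConvexOn.of_Iic_of_Ici (a := K) (convex_Ici 0)
    (hbelowK.subset (fun u hu ↦ ⟨hu.1, hu.2⟩) ((convex_Ici _).inter (convex_Iic _)))
    (hhigh.subset (fun u hu ↦ hu.2) ((convex_Ici _).inter (convex_Ici _)))
    (((hasDerivAt_mul_log_sq (he.trans hK).ne').hasDerivWithinAt.congr_of_mem
      renormGamma_eqOn_Icc_exp_one ⟨hK.le, le_rfl⟩).mono_of_mem_nhdsWithin (Icc_mem_nhdsLT hK))
    (((hasDerivAt_const_mul_mul_log_sub_const _ _ (he.trans hK).ne').hasDerivWithinAt.congr_of_mem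
      (renormGamma_eqOn_Ici hK.le) self_mem_Ici).mono Ioi_subset_Ici_self)
    ?_
  nlinarith

lemma deriv_deriv_renormGamma_of_mem_Ioo_zero (hK : exp 1 ≤ K) {u : ℝ} (hu : u ∈ Ioo 0 (exp 1)) :
    deriv (deriv (renormGamma K)) u = 0 := by
  rw [((renormGamma_eqOn_Icc_zero hK).eventuallyEq_of_mem (Icc_mem_nhds hu.1 hu.2)).deriv.deriv_eq]
  simp

lemma deriv_deriv_renormGamma_of_mem_Ioo {u : ℝ} (hu : u ∈ Ioo (exp 1) K) :
    deriv (deriv (renormGamma K)) u = 2 * log u / u + 2 / u := by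
  rw [(renormGamma_eqOn_Icc_exp_one.eventuallyEq_of_mem (Icc_mem_nhds hu.1 hu.2)).deriv.deriv_eq,
    deriv_deriv_mul_log_sq ((exp_pos 1).trans hu.1).ne']

lemma deriv_deriv_renormGamma_of_lt (hK : exp 1 ≤ K) {u : ℝ} (hu : K < u) :
    deriv (deriv (renormGamma K)) u = (2 + log K) / u := by
  rw [((renormGamma_eqOn_Ici hK).eventuallyEq_of_mem (Ici_mem_nhds hu)).deriv.deriv_eq,
    deriv_deriv_const_mul_mul_log_sub_const]

theorem le_deriv_deriv_renormGamma (hK : exp 1 < K) {u : ℝ} (hu : 0 < u) (hue : u ≠ exp 1)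
    (huK : u ≠ K) :
    (if exp 1 ≤ u then min (max 1 (log u)) (log K) / u else 0) ≤
      deriv (deriv (renormGamma K)) u := by
  rcases hue.lt_or_gt with hue | hue
  · rw [if_neg hue.not_ge, deriv_deriv_renormGamma_of_mem_Ioo_zero hK.le ⟨hu, hue⟩]
  rw [if_pos hue.le]
  have hlogu : 1 < log u := (lt_log_iff_exp_lt hu).2 hue
  rcases huK.lt_or_gt with huK | huK
  · rw [deriv_deriv_renormGamma_of_mem_Ioo ⟨hue, huK⟩, max_eq_right hlogu.le]
    calc min (log u) (log K) / u ≤ log u / u := by gcongr; exact min_le_left _ _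
      _ ≤ 2 * log u / u + 2 / u := by rw [← add_div]; gcongr; linarith
  · rw [deriv_deriv_renormGamma_of_lt hK.le huK]
    gcongr
    exact (min_le_right _ _).trans (by linarith)

end renormGamma

/-- The renormalization function `Γ_K(u) = u(log̃ u)²` for `u ≤ K` and
`(2+log K)u log u − 2K log K` for `u > K` (with `K ≥ e²`,
`log̃ u = max(1, log u)`) is convex on `[0,∞)` and satisfies
`Γ_K''(u) ≥ (log̃_K u)/u · 1_{u ≥ e}` away from the junction points
`u = e, K`. -/
theorem GammaK_convex_and_second_deriv_bound
    (K : ℝ) (hK : Real.exp 1 ^ 2 ≤ K)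
    (Γ : ℝ → ℝ)
    (hΓ : ∀ u : ℝ, Γ u =
      if u ≤ K then u * (max 1 (Real.log u)) ^ 2
      else (2 + Real.log K) * u * Real.log u - 2 * K * Real.log K) :
    ConvexOn ℝ (Set.Ici 0) Γ ∧
      ∀ u : ℝ, 0 < u → u ≠ Real.exp 1 → u ≠ K →
        (if Real.exp 1 ≤ u then min (max 1 (Real.log u)) (Real.log K) / u
          else 0) ≤ deriv (deriv Γ) u := by
  obtain rfl : Γ = renormGamma K := funext hΓ
  have hK' : exp 1 < K := (lt_self_pow₀ (one_lt_exp_iff.2 one_pos) one_lt_two).trans_le hK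
  exact ⟨convexOn_renormGamma hK', fun u hu hue huK ↦ le_deriv_deriv_renormGamma hK' hu hue huK⟩
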